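/- arXiv:math/0106168 — 6 statements merged into one kernel-verified Lean document; each statement's English description precedes it below -/
import Mathlib

section
/- If A is an m×n real matrix such that x = 0 is the only solution of the system {x ≥ 0, Ax ≤ 0}, then there exists a vector u ∈ ℝ^m with u > 0 (componentwise) and Aᵀu > 0 (componentwise). -/
/-!
Gordan's alternative: if `B w ≠ 0` for every `w` in the standard simplex, then `0` lies outside
the compact convex set `B '' stdSimplex`, and a functional `u` strictly separating the two is
positive on every column of `B`, i.e. `uᵀ B > 0`. Applied to `B = [A | I]`, a simplex vector
`w = (x, s)` with `A x + s = 0` gives `x ≥ 0` and `A x ≤ 0`, hence `x = 0`, `s = 0`, which is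
impossible; and `uᵀ [A | I] > 0` says exactly `Aᵀ u > 0` and `u > 0`.
-/

open Matrix Set

theorem LinearMap.apply_eq_dotProduct {κ R : Type*} [Fintype κ] [DecidableEq κ] [CommSemiring R]
    (f : (κ → R) →ₗ[R] R) (y : κ → R) : f y = (fun k => f (Pi.single k 1)) ⬝ᵥ y := by
  conv_lhs => rw [pi_eq_sum_univ' y]
  simp [dotProduct, mul_comm]

theorem Matrix.exists_vecMul_pos_of_mulVec_ne_zero {ι κ : Type*} [Fintype ι] [Fintype κ]
    (B : Matrix κ ι ℝ) (h : ∀ w ∈ stdSimplex ℝ ι, B *ᵥ w ≠ 0) :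
    ∃ u : κ → ℝ, ∀ i, 0 < (u ᵥ* B) i := by
  classical
  have h0 : (0 : κ → ℝ) ∉ B.mulVecLin '' stdSimplex ℝ ι := fun ⟨w, hw, hBw⟩ => h w hw hBw
  obtain ⟨f, c, hf0, hfK⟩ := geometric_hahn_banach_point_closed
    ((convex_stdSimplex ℝ ι).linear_image _)
    ((isCompact_stdSimplex ℝ ι).image B.mulVecLin.continuous_of_finiteDimensional).isClosed h0
  set u : κ → ℝ := fun k => f (Pi.single k 1)
  refine ⟨u, fun i => ?_⟩
  calc 0 = f 0 := f.map_zero.symm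
    _ < f (B *ᵥ Pi.single i 1) := hf0.trans (hfK _ ⟨_, single_mem_stdSimplex ℝ i, rfl⟩)
    _ = u ⬝ᵥ (B *ᵥ Pi.single i 1) := LinearMap.apply_eq_dotProduct f.toLinearMap _
    _ = (u ᵥ* B) i := by rw [dotProduct_mulVec, dotProduct_single, mul_one]

theorem stmt_0 (m n : ℕ) (A : Matrix (Fin m) (Fin n) ℝ)
    (h : ∀ x : Fin n → ℝ, (∀ j, 0 ≤ x j) → (∀ i, A.mulVec x i ≤ 0) → x = 0) :
    ∃ u : Fin m → ℝ, (∀ i, 0 < u i) ∧ ∀ j, 0 < A.transpose.mulVec u j := by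
  have hB : ∀ w ∈ stdSimplex ℝ (Fin n ⊕ Fin m), fromCols A 1 *ᵥ w ≠ 0 := by
    rintro w ⟨hw_nonneg, hw_sum⟩ hBw
    rw [fromCols_mulVec, one_mulVec] at hBw
    have hx : w ∘ Sum.inl = 0 := h _ (fun j => hw_nonneg _) fun i => by
      have hBw_i := congrFun hBw i
      simp only [Pi.add_apply, Function.comp_apply, Pi.zero_apply] at hBw_i
      linarith [hw_nonneg (Sum.inr i)]
    have hs : w ∘ Sum.inr = 0 := by simpa [hx] using hBw
    have hw : w = 0 := funext fun
      | .inl j => congrFun hx j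
      | .inr i => congrFun hs i
    simp [hw] at hw_sum
  obtain ⟨u, hu⟩ := exists_vecMul_pos_of_mulVec_ne_zero _ hB
  rw [vecMul_fromCols, vecMul_one] at hu
  exact ⟨u, fun i => hu (Sum.inr i), fun j => by simpa [mulVec_transpose] using hu (Sum.inl j)⟩
end

section
/- Let A ∈ ℝ^{m×n} be such that x = 0 is the only solution of {x ≥ 0, Ax ≤ 0}, and let g(y) = vol({x ∈ ℝ^n : x ≥ 0, Ax ≤ y}) for y ∈ ℝ^m. Then for every λ ∈ ℝ^m with λ > 0 and Aᵀλ > 0 componentwise, the integral ∫_{ℝ^m} e^{-⟨λ,y⟩} g(y) dy equals 1/(∏_{i=1}^m λ_i · ∏_{j=1}^n (Aᵀλ)_j). -/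
/-! Write `g(y)` as the integral of the indicator of `x ≥ 0, Ax ≤ y` and exchange the order of
integration (Tonelli). For fixed `x ≥ 0` the `y`-integral runs over the orthant `y ≥ Ax` and
factors into one-dimensional exponential integrals, giving `e^{-⟨λ, Ax⟩} / ∏ λᵢ`, and
`⟨λ, Ax⟩ = ⟨Aᵀλ, x⟩`. The remaining integral over the orthant `x ≥ 0` factors in the same way
into the integrals `∫_0^∞ e^{-(Aᵀλ)_j t} dt = 1 / (Aᵀλ)_j`. -/

open MeasureTheory Set Matrix

variable {ι κ : Type*} [Fintype ι] [Fintype κ]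

theorem volume_restrict_Ici_pi (a : ι → ℝ) :
    volume.restrict (Ici a) = Measure.pi fun i => volume.restrict (Ici (a i)) := by
  rw [← pi_univ_Ici, volume_pi, Measure.restrict_pi_pi]

theorem Real.exp_neg_dotProduct (c y : ι → ℝ) :
    Real.exp (-(c ⬝ᵥ y)) = ∏ i, Real.exp (-(c i * y i)) := by
  rw [dotProduct, ← Finset.sum_neg_distrib, Real.exp_sum]

theorem integrableOn_Ici_exp_neg_dotProduct {c : ι → ℝ} (hc : ∀ i, 0 < c i) (a : ι → ℝ) :
    IntegrableOn (fun y => Real.exp (-(c ⬝ᵥ y))) (Ici a) := by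
  simp_rw [IntegrableOn, volume_restrict_Ici_pi, Real.exp_neg_dotProduct]
  refine Integrable.fintype_prod (f := fun i t => Real.exp (-(c i * t))) fun i => ?_
  rw [← IntegrableOn, integrableOn_Ici_iff_integrableOn_Ioi]
  simpa using exp_neg_integrableOn_Ioi (a i) (hc i)

theorem integral_Ici_exp_neg_dotProduct {c : ι → ℝ} (hc : ∀ i, 0 < c i) (a : ι → ℝ) :
    ∫ y in Ici a, Real.exp (-(c ⬝ᵥ y)) = Real.exp (-(c ⬝ᵥ a)) / ∏ i, c i := by
  simp_rw [volume_restrict_Ici_pi, Real.exp_neg_dotProduct]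
  rw [integral_fintype_prod_eq_prod (fun i t => Real.exp (-(c i * t))),
    ← Finset.prod_div_distrib]
  refine Finset.prod_congr rfl fun i _ => ?_
  rw [integral_Ici_eq_integral_Ioi]
  simpa [neg_mul, div_neg, neg_div] using integral_exp_mul_Ioi (neg_lt_zero.mpr (hc i)) (a i)

theorem lintegral_Ici_exp_neg_dotProduct {c : ι → ℝ} (hc : ∀ i, 0 < c i) (a : ι → ℝ) :
    ∫⁻ y in Ici a, ENNReal.ofReal (Real.exp (-(c ⬝ᵥ y))) =
      ENNReal.ofReal (Real.exp (-(c ⬝ᵥ a)) / ∏ i, c i) := by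
  rw [← integral_Ici_exp_neg_dotProduct hc, ofReal_integral_eq_lintegral_ofReal
    (integrableOn_Ici_exp_neg_dotProduct hc a) (ae_of_all _ fun _ => (Real.exp_pos _).le)]

theorem lintegral_mul_measure_prodMk_preimage {α β : Type*} [MeasurableSpace α]
    [MeasurableSpace β] {μ : Measure α} {ν : Measure β} [SFinite μ] [SFinite ν]
    {f : α → ENNReal} (hf : Measurable f) {s : Set (α × β)} (hs : MeasurableSet s) :
    ∫⁻ a, f a * ν (Prod.mk a ⁻¹' s) ∂μ = ∫⁻ b, ∫⁻ a in (fun a => (a, b)) ⁻¹' s, f a ∂μ ∂ν := by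
  have hF : Measurable (s.indicator fun p => f p.1) := (hf.comp measurable_fst).indicator hs
  calc ∫⁻ a, f a * ν (Prod.mk a ⁻¹' s) ∂μ
      = ∫⁻ a, ∫⁻ b, s.indicator (fun p => f p.1) (a, b) ∂ν ∂μ := by
        refine lintegral_congr fun a => ?_
        rw [← lintegral_indicator_const (measurable_prodMk_left hs)]
        rfl
    _ = ∫⁻ b, ∫⁻ a, s.indicator (fun p => f p.1) (a, b) ∂μ ∂ν :=
        lintegral_lintegral_swap hF.aemeasurable
    _ = ∫⁻ b, ∫⁻ a in (fun a => (a, b)) ⁻¹' s, f a ∂μ ∂ν := by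
        refine lintegral_congr fun b => ?_
        rw [← lintegral_indicator (measurable_prodMk_right hs)]
        rfl

theorem measurable_volume_setOf_nonneg_mulVec_le (A : Matrix ι κ ℝ) :
    Measurable fun y : ι → ℝ => volume {x : κ → ℝ | 0 ≤ x ∧ A *ᵥ x ≤ y} :=
  measurable_measure_prodMk_left (s := {p : (ι → ℝ) × (κ → ℝ) | 0 ≤ p.2 ∧ A *ᵥ p.2 ≤ p.1})
    ((measurableSet_le measurable_const measurable_snd).inter
      (measurableSet_le (by fun_prop) measurable_fst))

theorem lintegral_exp_neg_dotProduct_mul_volume_setOf_nonneg_mulVec_le (A : Matrix ι κ ℝ)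
    {l : ι → ℝ} (hl : ∀ i, 0 < l i) (hAl : ∀ j, 0 < (Aᵀ *ᵥ l) j) :
    ∫⁻ y, ENNReal.ofReal (Real.exp (-(l ⬝ᵥ y))) * volume {x : κ → ℝ | 0 ≤ x ∧ A *ᵥ x ≤ y} =
      ENNReal.ofReal (1 / ((∏ i, l i) * ∏ j, (Aᵀ *ᵥ l) j)) := by
  set s : Set ((ι → ℝ) × (κ → ℝ)) := {p | A *ᵥ p.2 ≤ p.1}
  have hs : MeasurableSet s := measurableSet_le (by fun_prop) measurable_fst
  have hslice (y : ι → ℝ) :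
      volume {x : κ → ℝ | 0 ≤ x ∧ A *ᵥ x ≤ y} = volume.restrict (Ici 0) (Prod.mk y ⁻¹' s) := by
    rw [Measure.restrict_apply (measurable_prodMk_left hs), inter_comm]
    rfl
  calc ∫⁻ y, ENNReal.ofReal (Real.exp (-(l ⬝ᵥ y))) * volume {x : κ → ℝ | 0 ≤ x ∧ A *ᵥ x ≤ y}
      = ∫⁻ x in Ici 0, ∫⁻ y in Ici (A *ᵥ x), ENNReal.ofReal (Real.exp (-(l ⬝ᵥ y))) := by
        simp_rw [hslice]
        exact lintegral_mul_measure_prodMk_preimage (by fun_prop) hs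
    _ = ∫⁻ x in Ici 0, ENNReal.ofReal (Real.exp (-((Aᵀ *ᵥ l) ⬝ᵥ x))) *
          ENNReal.ofReal (1 / ∏ i, l i) := by
        refine lintegral_congr fun x => ?_
        rw [lintegral_Ici_exp_neg_dotProduct hl, ← ENNReal.ofReal_mul (Real.exp_pos _).le,
          dotProduct_mulVec, mulVec_transpose, mul_one_div]
    _ = ENNReal.ofReal (1 / ((∏ i, l i) * ∏ j, (Aᵀ *ᵥ l) j)) := by
        have hAlP : 0 < ∏ j, (Aᵀ *ᵥ l) j := Finset.prod_pos fun j _ => hAl j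
        rw [lintegral_mul_const _ (by fun_prop), lintegral_Ici_exp_neg_dotProduct hAl,
          ← ENNReal.ofReal_mul (by positivity)]
        congr 1
        simp only [dotProduct_zero, neg_zero, Real.exp_zero]
        ring

theorem stmt_3_general (m n : ℕ) (A : Matrix (Fin m) (Fin n) ℝ)
    (l : Fin m → ℝ) (hl : ∀ i, 0 < l i) (hAl : ∀ j, 0 < A.transpose.mulVec l j) :
    ∫ y : Fin m → ℝ,
        Real.exp (-(∑ i, l i * y i)) *
          (volume {x : Fin n → ℝ | (∀ j, 0 ≤ x j) ∧ ∀ i, A.mulVec x i ≤ y i}).toReal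
      = 1 / ((∏ i, l i) * ∏ j, A.transpose.mulVec l j) := by
  set F : (Fin m → ℝ) → ENNReal := fun y =>
    ENNReal.ofReal (Real.exp (-(l ⬝ᵥ y))) * volume {x : Fin n → ℝ | 0 ≤ x ∧ A *ᵥ x ≤ y}
  have hF : Measurable F :=
    Measurable.mul (by fun_prop) (measurable_volume_setOf_nonneg_mulVec_le A)
  have hlint := lintegral_exp_neg_dotProduct_mul_volume_setOf_nonneg_mulVec_le A hl hAl
  calc _ = ∫ y, (F y).toReal := by
        refine integral_congr_ae (ae_of_all _ fun y => ?_)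
        simp only [F, ENNReal.toReal_mul, ENNReal.toReal_ofReal (Real.exp_pos _).le]
        rfl
    -- `g(y)` might be `∞`, where `toReal` gives junk; the finite lintegral rules this out a.e.
    _ = (∫⁻ y, F y).toReal :=
        integral_toReal hF.aemeasurable (ae_lt_top hF (hlint ▸ ENNReal.ofReal_ne_top))
    _ = _ := by
        have hlP : 0 < ∏ i, l i := Finset.prod_pos fun i _ => hl i
        have hAlP : 0 < ∏ j, (Aᵀ *ᵥ l) j := Finset.prod_pos fun j _ => hAl j
        rw [hlint, ENNReal.toReal_ofReal (by positivity)]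

theorem stmt_3 (m n : ℕ) (A : Matrix (Fin m) (Fin n) ℝ)
    (h : ∀ x : Fin n → ℝ, (∀ j, 0 ≤ x j) → (∀ i, A.mulVec x i ≤ 0) → x = 0)
    (l : Fin m → ℝ) (hl : ∀ i, 0 < l i) (hAl : ∀ j, 0 < A.transpose.mulVec l j) :
    ∫ y : Fin m → ℝ,
        Real.exp (-(∑ i, l i * y i)) *
          (volume {x : Fin n → ℝ | (∀ j, 0 ≤ x j) ∧ ∀ i, A.mulVec x i ≤ y i}).toReal
      = 1 / ((∏ i, l i) * ∏ j, A.transpose.mulVec l j) :=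
  stmt_3_general m n A l hl hAl
end

section
/- Let a, b ∈ ℝ^n with a_j b_j ≠ 0 and a_j ≠ b_j for all j, and a_j/b_j ≠ a_k/b_k for all j ≠ k. Then ∑_{j=1}^n (a_j − b_j)^n / (a_j b_j ∏_{k ≠ j} (b_k a_j − a_k b_j)) = 1/∏_{j=1}^n b_j − 1/∏_{j=1}^n a_j. -/
open Finset Polynomial

/-!
Put `x j = a j / b j`. Lagrange interpolation of `P = (X - 1) ^ n` at the `n + 1` distinct nodes
`0, x 1, …, x n` recovers its leading coefficient `1` as `∑ v, P(v) / ∏ w ≠ v, (v - w)`. The node `0`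
contributes `∏ b / ∏ a`, and clearing the denominators `b j` turns the term of the node `x j`
into `∏ b` times the `j`-th term of the claimed sum.
-/

namespace Lagrange

variable {F : Type*} [Field F]

theorem coeff_card_eq_eval_zero_div_add_sum [DecidableEq F] {s : Finset F} (hs : 0 ∉ s)
    {P : F[X]} (hP : P.degree < #s + 1) :
    P.coeff #s = P.eval 0 / ∏ y ∈ s, (-y) +
      ∑ y ∈ s, P.eval y / (y * ∏ z ∈ s.erase y, (y - z)) := by
  have hcard : #(insert 0 s) = #s + 1 := card_insert_of_notMem hs
  have h := coeff_eq_sum (s := insert 0 s) (v := id) (Set.injOn_id _) (P := P)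
    (by rwa [hcard, Nat.cast_add, Nat.cast_one])
  rw [hcard, Nat.add_sub_cancel, sum_insert hs, erase_insert hs] at h
  rw [h]
  congr 1
  · simp only [id, zero_sub]
  · refine sum_congr rfl fun y hy => ?_
    have hy0 : (0 : F) ≠ y := fun h => hs (h ▸ hy)
    rw [erase_insert_of_ne hy0, prod_insert fun h => hs (mem_of_mem_erase h)]
    simp only [id, sub_zero]

theorem coeff_card_eq_eval_zero_div_add_sum_of_injective {ι : Type*} [Fintype ι] [DecidableEq ι]
    {x : ι → F} (hx : Function.Injective x) (hx0 : ∀ i, x i ≠ 0)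
    {P : F[X]} (hP : P.degree < Fintype.card ι + 1) :
    P.coeff (Fintype.card ι) = P.eval 0 / ∏ i, (-x i) +
      ∑ i, P.eval (x i) / (x i * ∏ j ∈ univ.erase i, (x i - x j)) := by
  classical
  have hcard : #(univ.image x) = Fintype.card ι := card_image_of_injective _ hx
  have h := coeff_card_eq_eval_zero_div_add_sum (s := univ.image x) (by simpa using hx0)
    (P := P) (by rwa [hcard])
  rw [hcard, prod_image hx.injOn, sum_image hx.injOn] at h
  rw [h]
  congr 2 with i
  rw [← image_erase hx, prod_image hx.injOn]

end Lagrange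

theorem sum_sub_one_pow_div_mul_prod_sub {F ι : Type*} [Field F] [Fintype ι] [DecidableEq ι]
    {x : ι → F} (hx : Function.Injective x) (hx0 : ∀ i, x i ≠ 0) :
    ∑ i, (x i - 1) ^ Fintype.card ι / (x i * ∏ j ∈ univ.erase i, (x i - x j))
      = 1 - (∏ i, x i)⁻¹ := by
  have hP : ((X - C 1 : F[X]) ^ Fintype.card ι).degree < Fintype.card ι + 1 := by
    rw [degree_pow, degree_X_sub_C, nsmul_one]
    exact_mod_cast Nat.lt_succ_self _
  have h := Lagrange.coeff_card_eq_eval_zero_div_add_sum_of_injective hx hx0 hP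
  have hcoeff : ((X - C 1 : F[X]) ^ Fintype.card ι).coeff (Fintype.card ι) = 1 := by
    have h := ((monic_X_sub_C (1 : F)).pow (Fintype.card ι)).coeff_natDegree
    rwa [natDegree_pow, natDegree_X_sub_C, mul_one] at h
  have hzero : ((X - C 1 : F[X]) ^ Fintype.card ι).eval 0 / ∏ i, (-x i) = (∏ i, x i)⁻¹ := by
    rw [prod_neg, card_univ, eval_pow, eval_sub, eval_X, eval_C, zero_sub,
      div_mul_cancel_left₀ (pow_ne_zero _ (neg_ne_zero.mpr one_ne_zero))]
  simp only [eval_pow, eval_sub, eval_X, eval_C] at h hzero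
  rw [hcoeff, hzero] at h
  exact eq_sub_of_add_eq' h.symm

theorem div_sub_one_pow_div_mul_prod_sub {ι F : Type*} [Field F] [Fintype ι] [DecidableEq ι]
    {a b : ι → F} (hb : ∀ i, b i ≠ 0) (j : ι) :
    (a j / b j - 1) ^ Fintype.card ι / (a j / b j * ∏ k ∈ univ.erase j, (a j / b j - a k / b k))
      = (∏ k, b k) * ((a j - b j) ^ Fintype.card ι /
          (a j * b j * ∏ k ∈ univ.erase j, (b k * a j - a k * b j))) := by
  have hden : a j / b j * ∏ k ∈ univ.erase j, (a j / b j - a k / b k)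
      = (a j * b j * ∏ k ∈ univ.erase j, (b k * a j - a k * b j)) /
          (b j ^ Fintype.card ι * ∏ k, b k) := by
    calc a j / b j * ∏ k ∈ univ.erase j, (a j / b j - a k / b k)
        = a j * b j / (b j * b j) *
            ∏ k ∈ univ.erase j, ((b k * a j - a k * b j) / (b j * b k)) := by
          congr 1
          · field_simp [hb j]
          · exact prod_congr rfl fun k _ => by field_simp [hb j, hb k]
      _ = (a j * b j * ∏ k ∈ univ.erase j, (b k * a j - a k * b j)) / ∏ k, (b j * b k) := by
          rw [prod_div_distrib, ← mul_prod_erase univ (fun k => b j * b k) (mem_univ j),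
            div_mul_div_comm]
      _ = _ := by rw [prod_mul_distrib, prod_const, card_univ]
  rw [hden, div_sub_one (hb j), div_pow]
  field_simp [hb j]

theorem stmt_10_general (n : ℕ) (a b : Fin n → ℝ)
    (hab : ∀ j, a j * b j ≠ 0)
    (hratio : ∀ j k, j ≠ k → a j / b j ≠ a k / b k) :
    ∑ j, (a j - b j) ^ n /
        (a j * b j * ∏ k ∈ univ.erase j, (b k * a j - a k * b j))
      = 1 / ∏ j, b j - 1 / ∏ j, a j := by
  have ha j : a j ≠ 0 := left_ne_zero_of_mul (hab j)
  have hb j : b j ≠ 0 := right_ne_zero_of_mul (hab j)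
  have hinj : Function.Injective fun j => a j / b j := fun j k h =>
    by_contra fun hjk => hratio j k hjk h
  have h := sum_sub_one_pow_div_mul_prod_sub hinj fun j => div_ne_zero (ha j) (hb j)
  beta_reduce at h
  rw [sum_congr rfl fun j _ => div_sub_one_pow_div_mul_prod_sub hb j, ← mul_sum,
    Fintype.card_fin, prod_div_distrib, inv_div] at h
  have hB : ∏ j, b j ≠ 0 := prod_ne_zero_iff.mpr fun j _ => hb j
  rw [← mul_right_inj' hB, h]
  field_simp

theorem stmt_10 (n : ℕ) (a b : Fin n → ℝ)
    (hab : ∀ j, a j * b j ≠ 0) (hne : ∀ j, a j ≠ b j)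
    (hratio : ∀ j k, j ≠ k → a j / b j ≠ a k / b k) :
    ∑ j, (a j - b j) ^ n /
        (a j * b j * ∏ k ∈ univ.erase j, (b k * a j - a k * b j))
      = 1 / ∏ j, b j - 1 / ∏ j, a j :=
  stmt_10_general n a b hab hratio
end

section
/- The volume formula for the m = 2 case is symmetric in the two constraints: under the assumptions a_j b_j ≠ 0, a_j ≠ b_j for all j, and a_j/b_j pairwise distinct, the expression 1/∏_j b_j − ∑_{j : a_j > b_j} (a_j−b_j)^n/(a_j b_j ∏_{k≠j}(b_k a_j − a_k b_j)) equals 1/∏_j a_j − ∑_{j : b_j > a_j} (b_j−a_j)^n/(a_j b_j ∏_{k≠j}(a_k b_j − b_k a_j)). -/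
/-!
Moving the terms with `b j < a j` to the other side (which flips their sign), the identity says
`∑ j, (b j - a j) ^ n / (a j * b j * ∏ k ≠ j, (a k * b j - b k * a j)) = 1 / ∏ a - 1 / ∏ b`.
This is the partial fraction decomposition of `t ↦ 1 / ∏ j, (a j + t * (b j - a j))`, whose
poles are simple by the distinctness of the ratios `a j / b j`, evaluated at `t = 0` and `t = 1`.
-/

open Finset

section

variable {F ι : Type*} [Field F] [DecidableEq ι] {s : Finset ι}

open Polynomial Lagrange in
theorem inv_prod_sub_eq_sum_nodalWeight_mul_inv_sub {v : ι → F} {x : F}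
    (hvs : Set.InjOn v s) (hs : s.Nonempty) (hx : ∀ i ∈ s, x ≠ v i) :
    (∏ i ∈ s, (x - v i))⁻¹ = ∑ i ∈ s, nodalWeight s v i * (x - v i)⁻¹ := by
  have h := eval_interpolate_not_at_node 1 hx
  simp only [interpolate_one hvs hs, eval_one, eval_nodal, Pi.one_apply, mul_one] at h
  exact inv_eq_of_mul_eq_one_right h.symm

open Lagrange in
theorem inv_prod_add_mul_eq_sum_div {p q : ι → F} {x : F} (hs : s.Nonempty)
    (hq : ∀ i ∈ s, q i ≠ 0)
    (hpq : (s : Set ι).Pairwise fun i j => p i * q j ≠ p j * q i)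
    (hx : ∀ i ∈ s, p i + x * q i ≠ 0) :
    (∏ i ∈ s, (p i + x * q i))⁻¹ =
      ∑ i ∈ s, q i ^ (#s - 1) / ((p i + x * q i) * ∏ j ∈ s.erase i, (p j * q i - p i * q j)) := by
  set v : ι → F := fun i => -p i / q i
  have hlin : ∀ i ∈ s, p i + x * q i = q i * (x - v i) := fun i hi => by
    simp only [v]
    field_simp [hq i hi]
    ring
  have hvs : Set.InjOn v s := by
    intro i hi j hj hij
    by_contra hne
    refine hpq hi hj hne ?_
    simp only [v, div_eq_div_iff (hq i hi) (hq j hj)] at hij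
    linear_combination -hij
  have hxv : ∀ i ∈ s, x ≠ v i := fun i hi hxi =>
    hx i hi (by rw [hlin i hi, hxi, sub_self, mul_zero])
  have hweight : ∀ i ∈ s, nodalWeight s v i =
      q i ^ (#s - 1) * (∏ j ∈ s.erase i, q j) / ∏ j ∈ s.erase i, (p j * q i - p i * q j) := by
    intro i hi
    have hfactor : ∀ j ∈ s.erase i, (v i - v j)⁻¹ = q i * q j / (p j * q i - p i * q j) := by
      intro j hj
      replace hj := mem_of_mem_erase hj
      simp only [v]
      rw [div_sub_div _ _ (hq i hi) (hq j hj), inv_div]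
      congr 1
      ring
    rw [nodalWeight, prod_congr rfl hfactor, prod_div_distrib, prod_mul_distrib, prod_const,
      card_erase_of_mem hi]
  rw [prod_congr rfl hlin, prod_mul_distrib, mul_inv,
    inv_prod_sub_eq_sum_nodalWeight_mul_inv_sub hvs hs hxv, mul_sum]
  refine sum_congr rfl fun i hi => ?_
  have hrest : ∏ j ∈ s.erase i, q j ≠ 0 :=
    prod_ne_zero_iff.mpr fun j hj => hq j (mem_of_mem_erase hj)
  rw [hweight i hi, hlin i hi, ← mul_prod_erase s q hi]
  generalize ∏ j ∈ s.erase i, (p j * q i - p i * q j) = D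
  have hxvi := sub_ne_zero.mpr (hxv i hi)
  field_simp

theorem sum_pow_sub_div_eq_inv_prod_sub_inv_prod {a b : ι → F} (ha : ∀ i ∈ s, a i ≠ 0)
    (hb : ∀ i ∈ s, b i ≠ 0) (hne : ∀ i ∈ s, a i ≠ b i)
    (hcross : (s : Set ι).Pairwise fun i j => a i * b j ≠ a j * b i) :
    ∑ i ∈ s, (b i - a i) ^ #s / (a i * b i * ∏ j ∈ s.erase i, (a j * b i - b j * a i)) =
      (∏ i ∈ s, a i)⁻¹ - (∏ i ∈ s, b i)⁻¹ := by
  rcases s.eq_empty_or_nonempty with rfl | hs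
  · simp
  have hq : ∀ i ∈ s, b i - a i ≠ 0 := fun i hi => sub_ne_zero.mpr (hne i hi).symm
  have hpq : (s : Set ι).Pairwise fun i j => a i * (b j - a j) ≠ a j * (b i - a i) :=
    fun i hi j hj hij h => hcross hi hj hij (by linear_combination h)
  have h0 := inv_prod_add_mul_eq_sum_div (x := 0) hs hq hpq (by simpa using ha)
  have h1 := inv_prod_add_mul_eq_sum_div (x := 1) hs hq hpq (by simpa using hb)
  simp only [zero_mul, add_zero, one_mul, add_sub_cancel] at h0 h1
  rw [h0, h1, ← sum_sub_distrib]
  refine sum_congr rfl fun i hi => ?_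
  have hD : ∏ j ∈ s.erase i, (a j * (b i - a i) - a i * (b j - a j)) =
      ∏ j ∈ s.erase i, (a j * b i - b j * a i) :=
    prod_congr rfl fun j _ => by ring
  obtain ⟨m, hm⟩ : ∃ m, #s = m + 1 := Nat.exists_eq_add_one.mpr (card_pos.mpr hs)
  rw [hD, hm, Nat.add_sub_cancel]
  have hai := ha i hi
  have hbi := hb i hi
  generalize ∏ j ∈ s.erase i, (a j * b i - b j * a i) = D
  rcases eq_or_ne D 0 with rfl | hD0
  · simp
  field_simp
  ring

theorem sub_pow_div_prod_sub_eq_neg_swap {a b : ι → F} {i : ι} (hi : i ∈ s) :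
    (a i - b i) ^ #s / (a i * b i * ∏ j ∈ s.erase i, (b j * a i - a j * b i)) =
      -((b i - a i) ^ #s / (a i * b i * ∏ j ∈ s.erase i, (a j * b i - b j * a i))) := by
  set m := #(s.erase i)
  set D := ∏ j ∈ s.erase i, (a j * b i - b j * a i)
  have hflip : ∏ j ∈ s.erase i, (b j * a i - a j * b i) = (-1) ^ m * D := by
    rw [← prod_neg]
    exact prod_congr rfl fun j _ => by ring
  have hsign : (-1 : F) ^ m ≠ 0 := pow_ne_zero _ (neg_ne_zero.mpr one_ne_zero)
  rw [hflip, ← card_erase_add_one hi, ← neg_sub (b i)]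
  calc (-(b i - a i)) ^ (m + 1) / (a i * b i * ((-1) ^ m * D))
      = (-1) ^ m * -(b i - a i) ^ (m + 1) / ((-1) ^ m * (a i * b i * D)) := by
        congr 1
        · rw [neg_pow]
          ring
        · ring
    _ = -((b i - a i) ^ (m + 1) / (a i * b i * D)) := by rw [mul_div_mul_left _ _ hsign, neg_div]

end

theorem stmt_12 (n : ℕ) (a b : Fin n → ℝ)
    (hab : ∀ j, a j * b j ≠ 0) (hne : ∀ j, a j ≠ b j)
    (hratio : ∀ j k, j ≠ k → a j / b j ≠ a k / b k) :
    1 / ∏ j, b j -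
        ∑ j ∈ univ.filter (fun j => b j < a j),
          (a j - b j) ^ n /
            (a j * b j * ∏ k ∈ univ.erase j, (b k * a j - a k * b j))
      = 1 / ∏ j, a j -
          ∑ j ∈ univ.filter (fun j => a j < b j),
            (b j - a j) ^ n /
              (a j * b j * ∏ k ∈ univ.erase j, (a k * b j - b k * a j)) := by
  have ha j := left_ne_zero_of_mul (hab j)
  have hb j := right_ne_zero_of_mul (hab j)
  have hcross : Pairwise fun j k => a j * b k ≠ a k * b j := fun j k hjk h =>
    hratio j k hjk ((div_eq_div_iff (hb j) (hb k)).mpr h)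
  have hsum := sum_pow_sub_div_eq_inv_prod_sub_inv_prod (s := univ) (fun j _ => ha j)
    (fun j _ => hb j) (fun j _ => hne j) (hcross.set_pairwise _)
  have hnot_lt : univ.filter (fun j => ¬ a j < b j) = univ.filter (fun j => b j < a j) :=
    filter_congr fun j _ => by rw [not_lt, le_iff_lt_or_eq, or_iff_left (hne j).symm]
  have hflip j := sub_pow_div_prod_sub_eq_neg_swap (a := a) (b := b) (mem_univ j)
  rw [← sum_filter_add_sum_filter_not _ (fun j => a j < b j), hnot_lt] at hsum
  simp only [card_univ, Fintype.card_fin] at hflip hsum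
  rw [sum_congr rfl fun j _ => hflip j, sum_neg_distrib, one_div, one_div]
  linarith
end

section
/- Let A ∈ ℝ^{m×n} with x = 0 the only solution of {x ≥ 0, Ax ≤ 0}. Then the set of λ ∈ ℝ^m with λ > 0 and Aᵀλ > 0 is a nonempty open convex cone in ℝ^m. -/
/-!
Stacking the identity on top of `Aᵀ` gives `M = fromRows 1 Aᵀ`, and the set in question is
`{l | ∀ k, 0 < (M *ᵥ l) k}`, the strict solution set of a homogeneous linear system; such a set is
always an open convex cone. It is nonempty by Gordan's alternative: the image of the standard
simplex under `z ↦ z ᵥ* M = z₁ + A *ᵥ z₂` is a compact convex set, it misses `0` because of the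
hypothesis on `A`, and a functional separating it from `0` is `v ↦ l ⬝ᵥ v` with `M *ᵥ l > 0`.
-/

open Matrix

theorem StrongDual.apply_eq_sum_mul_single {ι : Type*} [Fintype ι] [DecidableEq ι]
    (φ : StrongDual ℝ (ι → ℝ)) (y : ι → ℝ) : φ y = ∑ i, y i * φ (Pi.single i 1) := by
  conv_lhs => rw [← Finset.univ_sum_single y]
  simp_rw [map_sum, ← smul_eq_mul, ← map_smul, ← Pi.single_smul', smul_eq_mul, mul_one]

namespace Matrix

variable {κ ι : Type*} [Fintype ι] (M : Matrix κ ι ℝ)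

theorem isOpen_setOf_forall_mulVec_pos [Finite κ] : IsOpen {x | ∀ k, 0 < (M *ᵥ x) k} := by
  simp only [Set.ofPred_forall]
  exact isOpen_iInter_of_finite fun k => isOpen_lt continuous_const
    ((continuous_apply k).comp M.mulVecLin.continuous_of_finiteDimensional)

theorem convex_setOf_forall_mulVec_pos : Convex ℝ {x | ∀ k, 0 < (M *ᵥ x) k} := by
  simp only [Set.ofPred_forall]
  exact convex_iInter fun k => convex_halfSpace_gt (LinearMap.proj k ∘ₗ M.mulVecLin).isLinear 0

theorem smul_mem_setOf_forall_mulVec_pos {t : ℝ} (ht : 0 < t) {x : ι → ℝ}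
    (hx : ∀ k, 0 < (M *ᵥ x) k) : ∀ k, 0 < (M *ᵥ (t • x)) k := by
  simpa [mulVec_smul] using fun k => mul_pos ht (hx k)

/-- Gordan's theorem. -/
theorem exists_forall_mulVec_pos [Fintype κ]
    (h : ∀ z : κ → ℝ, (∀ k, 0 ≤ z k) → z ᵥ* M = 0 → z = 0) : ∃ x, ∀ k, 0 < (M *ᵥ x) k := by
  classical
  set K := M.vecMulLinear '' stdSimplex ℝ κ
  have hK : IsCompact K :=
    (isCompact_stdSimplex ℝ κ).image M.vecMulLinear.continuous_of_finiteDimensional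
  have h0 : (0 : ι → ℝ) ∉ K := by
    rintro ⟨z, ⟨hz, hsum⟩, hzM⟩
    simp [h z hz hzM] at hsum
  obtain ⟨φ, u, hφ0, hφK⟩ :=
    geometric_hahn_banach_point_closed ((convex_stdSimplex ℝ κ).linear_image _) hK.isClosed h0
  refine ⟨fun i => φ (Pi.single i 1), fun k => ?_⟩
  have hrow : (M *ᵥ fun i => φ (Pi.single i 1)) k = φ (M.vecMulLinear (Pi.single k 1)) := by
    rw [vecMulLinear_apply, single_one_vecMul, StrongDual.apply_eq_sum_mul_single φ]
    rfl
  rw [hrow]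
  exact (map_zero φ ▸ hφ0).trans (hφK _ ⟨_, single_mem_stdSimplex ℝ k, rfl⟩)

theorem eq_zero_of_nonneg_of_vecMul_fromRows_one_transpose_eq_zero [Fintype κ] [DecidableEq κ]
    (A : Matrix κ ι ℝ) (hA : ∀ x : ι → ℝ, (∀ j, 0 ≤ x j) → (∀ i, (A *ᵥ x) i ≤ 0) → x = 0)
    (z : κ ⊕ ι → ℝ) (hz : ∀ k, 0 ≤ z k) (hzA : z ᵥ* fromRows 1 Aᵀ = 0) : z = 0 := by
  rw [vecMul_fromRows, vecMul_one, vecMul_transpose] at hzA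
  have hAz : A *ᵥ (z ∘ Sum.inr) = -(z ∘ Sum.inl) := eq_neg_of_add_eq_zero_right hzA
  have hr : z ∘ Sum.inr = 0 := hA _ (fun j => hz _) fun i => by simpa [hAz] using hz (Sum.inl i)
  have hl : z ∘ Sum.inl = 0 := by simpa [hr] using hAz
  ext (i | j)
  exacts [congrFun hl i, congrFun hr j]

end Matrix

theorem stmt_15 (m n : ℕ) (A : Matrix (Fin m) (Fin n) ℝ)
    (h : ∀ x : Fin n → ℝ, (∀ j, 0 ≤ x j) → (∀ i, A.mulVec x i ≤ 0) → x = 0) :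
    let S : Set (Fin m → ℝ) :=
      {l | (∀ i, 0 < l i) ∧ ∀ j, 0 < A.transpose.mulVec l j}
    S.Nonempty ∧ IsOpen S ∧ Convex ℝ S ∧
      ∀ t : ℝ, 0 < t → ∀ l ∈ S, t • l ∈ S := by
  intro S
  have hS : S = {l | ∀ k, 0 < (fromRows (1 : Matrix (Fin m) (Fin m) ℝ) Aᵀ *ᵥ l) k} := by
    ext l
    simp [S, Sum.forall]
  rw [hS]
  exact ⟨exists_forall_mulVec_pos _
      (eq_zero_of_nonneg_of_vecMul_fromRows_one_transpose_eq_zero A h),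
    isOpen_setOf_forall_mulVec_pos _, convex_setOf_forall_mulVec_pos _,
    fun t ht l hl => smul_mem_setOf_forall_mulVec_pos _ ht hl⟩
end

section
/- Let A ∈ ℝ^{m×n} with x = 0 the only solution of {x ≥ 0, Ax ≤ 0}, and define g(y) = vol({x ≥ 0, Ax ≤ y}). Then for every λ > 0 with Aᵀλ > 0, the function y ↦ e^{-⟨λ,y⟩} g(y) is Lebesgue integrable over ℝ^m. -/
open MeasureTheory
open Set ENNReal


lemma aux_fin (p : ℕ) (a : Fin p → ℝ) (ha : ∀ i, 0 < a i) :
    ∫⁻ z : Fin p → ℝ, {z : Fin p → ℝ | ∀ i, 0 ≤ z i}.indicator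
      (fun z => ENNReal.ofReal (Real.exp (-∑ i, a i * z i))) z < ⊤ := by
  set f : Fin p → ℝ → ℝ := fun i => (Set.Ici (0:ℝ)).indicator (fun t => Real.exp (-(a i) * t))
  have hfi : ∀ i, Integrable (f i) := by
    intro i
    rw [integrable_indicator_iff measurableSet_Ici]
    rw [integrableOn_Ici_iff_integrableOn_Ioi]
    exact exp_neg_integrableOn_Ioi 0 (ha i)
  have hF : Integrable (fun z : Fin p → ℝ => ∏ i, f i (z i)) :=
    Integrable.fintype_prod hfi
  have heq : ∀ z : Fin p → ℝ, {z : Fin p → ℝ | ∀ i, 0 ≤ z i}.indicator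
      (fun z => ENNReal.ofReal (Real.exp (-∑ i, a i * z i))) z
      = ENNReal.ofReal (∏ i, f i (z i)) := by
    intro z
    by_cases hz : ∀ i, 0 ≤ z i
    · rw [Set.indicator_of_mem (show z ∈ {z : Fin p → ℝ | ∀ i, 0 ≤ z i} from hz)]
      have h2 : ∀ i ∈ Finset.univ, f i (z i) = Real.exp (-a i * z i) := fun i _ =>
        Set.indicator_of_mem (hz i) _
      rw [Finset.prod_congr rfl h2, ← Real.exp_sum]
      congr 1
      rw [← Finset.sum_neg_distrib]
      exact congrArg _ (Finset.sum_congr rfl fun i _ => (neg_mul _ _).symm)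
    · rw [Set.indicator_of_notMem (show z ∉ {z : Fin p → ℝ | ∀ i, 0 ≤ z i} from hz)]
      push_neg at hz
      obtain ⟨i, hi⟩ := hz
      have : f i (z i) = 0 := Set.indicator_of_notMem (by simpa using hi) _
      rw [Finset.prod_eq_zero (Finset.mem_univ i) this, ENNReal.ofReal_zero]
  simp_rw [heq]
  exact hF.lintegral_lt_top

set_option maxHeartbeats 1000000 in
theorem stmt_18 (m n : ℕ) (A : Matrix (Fin m) (Fin n) ℝ)
    (h : ∀ x : Fin n → ℝ, (∀ j, 0 ≤ x j) → (∀ i, A.mulVec x i ≤ 0) → x = 0)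
    (l : Fin m → ℝ) (hl : ∀ i, 0 < l i) (hAl : ∀ j, 0 < A.transpose.mulVec l j) :
    Integrable (fun y : Fin m → ℝ =>
      Real.exp (-(∑ i, l i * y i)) *
        (volume {x : Fin n → ℝ | (∀ j, 0 ≤ x j) ∧ ∀ i, A.mulVec x i ≤ y i}).toReal) := by
  classical
  set S : (Fin m → ℝ) → Set (Fin n → ℝ) :=
    fun y => {x | (∀ j, 0 ≤ x j) ∧ ∀ i, A.mulVec x i ≤ y i} with hSdef
  set T : Set ((Fin m → ℝ) × (Fin n → ℝ)) :=
    {p | (∀ j, 0 ≤ p.2 j) ∧ ∀ i, A.mulVec p.2 i ≤ p.1 i} with hTdef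
  have hcont : ∀ i, Continuous fun x : Fin n → ℝ => A.mulVec x i := by
    intro i
    simp only [Matrix.mulVec, dotProduct]
    exact continuous_finset_sum _ fun j _ => continuous_const.mul (continuous_apply j)
  have hTm : MeasurableSet T := by
    have : T = (⋂ j, {p : (Fin m → ℝ) × (Fin n → ℝ) | 0 ≤ p.2 j}) ∩
        (⋂ i, {p : (Fin m → ℝ) × (Fin n → ℝ) | A.mulVec p.2 i ≤ p.1 i}) := by
      ext p
      simp [hTdef, Set.mem_iInter]
    rw [this]
    refine (MeasurableSet.iInter fun j => ?_).inter (MeasurableSet.iInter fun i => ?_)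
    · exact measurableSet_le measurable_const (by fun_prop)
    · exact measurableSet_le ((hcont i).measurable.comp measurable_snd) (by fun_prop)
  have hSm : ∀ y, MeasurableSet (S y) := fun y => hTm.preimage measurable_prodMk_left
  have hvol : Measurable fun y => volume (S y) := measurable_measure_prodMk_left hTm
  set g : (Fin m → ℝ) → ℝ≥0∞ := fun y => ENNReal.ofReal (Real.exp (-∑ i, l i * y i)) with hgdef
  have hgm : Measurable g := by
    apply ENNReal.measurable_ofReal.comp
    fun_prop
  have hposm : ∀ (q : ℕ), MeasurableSet {z : Fin q → ℝ | ∀ i, 0 ≤ z i} := by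
    intro q
    rw [Set.setOf_forall]
    exact MeasurableSet.iInter fun i => measurableSet_le measurable_const (measurable_pi_apply i)
  have hmeas : Measurable (fun y : Fin m → ℝ =>
      Real.exp (-(∑ i, l i * y i)) * (volume (S y)).toReal) := by
    refine Measurable.mul (by fun_prop) hvol.ennreal_toReal
  have hindic : ∀ (y : Fin m → ℝ) (x : Fin n → ℝ),
      T.indicator (1 : ((Fin m → ℝ) × (Fin n → ℝ)) → ℝ≥0∞) (y, x) = (S y).indicator 1 x := by
    intro y x
    by_cases hx : x ∈ S y
    · rw [Set.indicator_of_mem hx, Set.indicator_of_mem (show (y, x) ∈ T from hx)]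
      rfl
    · rw [Set.indicator_of_notMem hx, Set.indicator_of_notMem (show (y, x) ∉ T from hx)]
  have hdp : ∀ x : Fin n → ℝ, ∑ i, l i * A.mulVec x i = ∑ j, A.transpose.mulVec l j * x j := by
    intro x
    have h1 : dotProduct l (A.mulVec x) = dotProduct (A.transpose.mulVec l) x := by
      rw [Matrix.dotProduct_mulVec, Matrix.mulVec_transpose]
    simpa [dotProduct] using h1
  set K : ℝ≥0∞ := ∫⁻ (z : Fin m → ℝ), {z : Fin m → ℝ | ∀ i, 0 ≤ z i}.indicator
      (fun z => ENNReal.ofReal (Real.exp (-∑ i, l i * z i))) z with hK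
  have hKlt : K < ⊤ := aux_fin m l hl
  set K' : ℝ≥0∞ := ∫⁻ (x : Fin n → ℝ), {x : Fin n → ℝ | ∀ j, 0 ≤ x j}.indicator
      (fun x => ENNReal.ofReal (Real.exp (-∑ j, A.transpose.mulVec l j * x j))) x with hK'
  have hK'lt : K' < ⊤ := aux_fin n (A.transpose.mulVec l) hAl
  have key : ∫⁻ y, g y * volume (S y) < ⊤ := by
    have step1 : ∫⁻ y, g y * volume (S y) = ∫⁻ y, ∫⁻ x, g y * T.indicator 1 (y, x) := by
      refine lintegral_congr fun y => ?_
      rw [← lintegral_indicator_one (hSm y),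
        ← lintegral_const_mul (g y) (measurable_one.indicator (hSm y))]
      simp_rw [hindic]
    have hum : Measurable fun p : (Fin m → ℝ) × (Fin n → ℝ) => g p.1 * T.indicator 1 p :=
      (hgm.comp measurable_fst).mul (measurable_one.indicator hTm)
    have step2 : ∫⁻ y, ∫⁻ x, g y * T.indicator 1 (y, x) =
        ∫⁻ x, ∫⁻ y, g y * T.indicator 1 (y, x) :=
      lintegral_lintegral_swap hum.aemeasurable
    have step3 : ∀ x : Fin n → ℝ, ∫⁻ y, g y * T.indicator 1 (y, x) =
        ({x : Fin n → ℝ | ∀ j, 0 ≤ x j}.indicator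
          (fun x => ENNReal.ofReal (Real.exp (-∑ j, A.transpose.mulVec l j * x j))) x) * K := by
      intro x
      by_cases hx : ∀ j, 0 ≤ x j
      · have hT1 : ∀ y, g y * T.indicator (1 : ((Fin m → ℝ) × (Fin n → ℝ)) → ℝ≥0∞) (y, x) =
            {y : Fin m → ℝ | ∀ i, A.mulVec x i ≤ y i}.indicator g y := by
          intro y
          by_cases hy : ∀ i, A.mulVec x i ≤ y i
          · rw [Set.indicator_of_mem (show (y, x) ∈ T from ⟨hx, hy⟩),
              Set.indicator_of_mem (show y ∈ {y : Fin m → ℝ | ∀ i, A.mulVec x i ≤ y i} from hy)]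
            simp
          · rw [Set.indicator_of_notMem (show (y, x) ∉ T from fun hc => hy hc.2),
              Set.indicator_of_notMem (show y ∉ {y : Fin m → ℝ | ∀ i, A.mulVec x i ≤ y i} from hy), mul_zero]
        simp_rw [hT1]
        rw [← lintegral_add_right_eq_self
          (fun y => {y : Fin m → ℝ | ∀ i, A.mulVec x i ≤ y i}.indicator g y) (A.mulVec x)]
        have hshift : ∀ z : Fin m → ℝ,
            {y : Fin m → ℝ | ∀ i, A.mulVec x i ≤ y i}.indicator g (z + A.mulVec x)
            = ENNReal.ofReal (Real.exp (-∑ j, A.transpose.mulVec l j * x j)) *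
              {z : Fin m → ℝ | ∀ i, 0 ≤ z i}.indicator
                (fun z => ENNReal.ofReal (Real.exp (-∑ i, l i * z i))) z := by
          intro z
          by_cases hz : ∀ i, 0 ≤ z i
          · rw [Set.indicator_of_mem
                (show z + A.mulVec x ∈ {y : Fin m → ℝ | ∀ i, A.mulVec x i ≤ y i} from fun i => le_add_of_nonneg_left (hz i)),
              Set.indicator_of_mem (show z ∈ {z : Fin m → ℝ | ∀ i, 0 ≤ z i} from hz)]
            simp only [hgdef]
            rw [← ENNReal.ofReal_mul (Real.exp_pos _).le, ← Real.exp_add]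
            congr 2
            have heq2 : ∑ i, l i * (z + A.mulVec x) i
                = ∑ j, A.transpose.mulVec l j * x j + ∑ i, l i * z i := by
              rw [← hdp x, ← Finset.sum_add_distrib]
              exact Finset.sum_congr rfl fun i _ => by
                rw [Pi.add_apply, mul_add, add_comm]
            rw [heq2, neg_add]
          · rw [Set.indicator_of_notMem (show z ∉ {z : Fin m → ℝ | ∀ i, 0 ≤ z i} from hz), mul_zero,
              Set.indicator_of_notMem]
            intro hc
            exact hz fun i => by have h3 := hc i; simpa using h3
        simp_rw [hshift]
        rw [lintegral_const_mul' _ _ ENNReal.ofReal_ne_top,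
          Set.indicator_of_mem (show x ∈ {x : Fin n → ℝ | ∀ j, 0 ≤ x j} from hx), ← hK]
      · have hz : ∀ y, T.indicator (1 : ((Fin m → ℝ) × (Fin n → ℝ)) → ℝ≥0∞) (y, x) = 0 := fun y =>
          Set.indicator_of_notMem (fun hc => hx hc.1) _
        simp [hz, Set.indicator_of_notMem (show x ∉ {x : Fin n → ℝ | ∀ j, 0 ≤ x j} from hx)]
    rw [step1, step2, lintegral_congr step3,
      lintegral_mul_const' K _ hKlt.ne, ← hK']
    exact ENNReal.mul_lt_top hK'lt hKlt
  refine ⟨hmeas.aestronglyMeasurable, ?_⟩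
  rw [hasFiniteIntegral_iff_ofReal (Filter.Eventually.of_forall fun y =>
    mul_nonneg (Real.exp_pos _).le ENNReal.toReal_nonneg)]
  refine lt_of_le_of_lt (lintegral_mono fun y => ?_) key
  rw [ENNReal.ofReal_mul (Real.exp_pos _).le]
  exact mul_le_mul_right ENNReal.ofReal_toReal_le _
end
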